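/- arXiv:2008.02337 — 3 statements merged into one kernel-verified Lean document; each statement's English description precedes it below -/
import Mathlib

section
/- For any b ∈ ℝ, σ > 0, and τ > 0, the integral over x ∈ ℝ of (1/√(2πτ)) · Q(b + x/σ) · exp(−x²/(2τ)) dx equals Q(bσ/√(σ² + τ)), where Q(x) = ∫_x^∞ (1/√(2π)) exp(−t²/2) dt is the Gaussian tail function. -/
/-!
Read `gaussQ y` as `P(Z > y)` for a standard normal `Z`. Averaging against the `N(0, τ)` density
turns the left-hand side into `P(Z > b + X / σ) = P(σ Z - X > b σ)` with `X ~ N(0, τ)` independent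
of `Z`, and `σ Z - X ~ N(0, σ² + τ)` since variances of independent Gaussians add.
-/

open MeasureTheory Real

/-- The standard Gaussian tail (complementary CDF) function. -/
noncomputable def gaussQ (x : ℝ) : ℝ :=
  ∫ t in Set.Ioi x, (Real.sqrt (2 * Real.pi))⁻¹ * Real.exp (-(t ^ 2) / 2)

open ProbabilityTheory NNReal Set

lemma gaussQ_eq_measureReal_gaussianReal (x : ℝ) : gaussQ x = (gaussianReal 0 1).real (Ioi x) := by
  rw [measureReal_def, gaussianReal_apply_eq_integral _ one_ne_zero,
    ENNReal.toReal_ofReal (setIntegral_nonneg measurableSet_Ioi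
      fun t _ => gaussianPDFReal_nonneg 0 1 t)]
  simp [gaussQ, gaussianPDFReal]

lemma measureReal_gaussianReal_Ioi (μ : ℝ) {v : ℝ≥0} (hv : v ≠ 0) (y : ℝ) :
    (gaussianReal μ v).real (Ioi y) = gaussQ ((y - μ) / √v) := by
  have hlaw : gaussianReal μ v = ((gaussianReal 0 1).map (√(v : ℝ) * ·)).map (μ + ·) := by
    rw [gaussianReal_map_const_mul, gaussianReal_map_const_add]
    congr 1
    · simp
    · ext; simp
  rw [hlaw, map_measureReal_apply (measurable_const_add μ) measurableSet_Ioi,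
    preimage_const_add_Ioi, map_measureReal_apply (measurable_const_mul _) measurableSet_Ioi,
    preimage_const_mul_Ioi₀ _ (by positivity), gaussQ_eq_measureReal_gaussianReal]

lemma gaussianReal_prod_gaussianReal_map_linear (a c m₁ m₂ : ℝ) (v₁ v₂ : ℝ≥0) :
    ((gaussianReal m₁ v₁).prod (gaussianReal m₂ v₂)).map (fun p => a * p.1 + c * p.2)
      = gaussianReal (a * m₁ + c * m₂)
          (.mk (a ^ 2) (sq_nonneg a) * v₁ + .mk (c ^ 2) (sq_nonneg c) * v₂) := by
  rw [← gaussianReal_conv_gaussianReal, ← gaussianReal_map_const_mul,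
    ← gaussianReal_map_const_mul, Measure.conv,
    Measure.map_prod_map _ _ (measurable_const_mul a) (measurable_const_mul c),
    Measure.map_map measurable_add (by fun_prop)]
  rfl

lemma measureReal_prod_eq_integral {α β : Type*} [MeasurableSpace α] [MeasurableSpace β]
    (μ : Measure α) (ν : Measure β) [IsFiniteMeasure ν] {s : Set (α × β)} (hs : MeasurableSet s) :
    (μ.prod ν).real s = ∫ x, ν.real (Prod.mk x ⁻¹' s) ∂μ := by
  rw [measureReal_def, Measure.prod_apply hs, ← integral_toReal
    (measurable_measure_prodMk_left hs).aemeasurable (ae_of_all _ fun _ => measure_lt_top _ _)]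
  rfl

lemma prodMk_preimage_Ioi_neg_add_mul {σ : ℝ} (hσ : 0 < σ) (b x : ℝ) :
    Prod.mk x ⁻¹' ((fun p : ℝ × ℝ => -1 * p.1 + σ * p.2) ⁻¹' Ioi (b * σ)) = Ioi (b + x / σ) := by
  ext t
  have hscale : -1 * x + σ * t - b * σ = σ * (t - (b + x / σ)) := by field_simp; ring
  rw [mem_preimage, mem_preimage, mem_Ioi, mem_Ioi, ← sub_pos, hscale,
    mul_pos_iff_of_pos_left hσ, sub_pos]

theorem gaussQ_smoothing (b σ τ : ℝ) (hσ : 0 < σ) (hτ : 0 < τ) :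
    ∫ x : ℝ, (Real.sqrt (2 * Real.pi * τ))⁻¹ * gaussQ (b + x / σ) *
      Real.exp (-(x ^ 2) / (2 * τ))
    = gaussQ (b * σ / Real.sqrt (σ ^ 2 + τ)) := by
  set v : ℝ≥0 := τ.toNNReal
  have hv : v ≠ 0 := (Real.toNNReal_pos.mpr hτ).ne'
  have hvτ : (v : ℝ) = τ := Real.coe_toNNReal τ hτ.le
  calc _ = ∫ x, (gaussianReal 0 1).real (Ioi (b + x / σ)) ∂gaussianReal 0 v := by
        rw [integral_gaussianReal_eq_integral_smul hv]
        congr with x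
        rw [gaussianPDFReal, hvτ, sub_zero, smul_eq_mul, gaussQ_eq_measureReal_gaussianReal]
        ring
    _ = ((gaussianReal 0 v).prod (gaussianReal 0 1)).real
          ((fun p => -1 * p.1 + σ * p.2) ⁻¹' Ioi (b * σ)) := by
        rw [measureReal_prod_eq_integral _ _ (measurableSet_Ioi.preimage (by fun_prop))]
        simp_rw [prodMk_preimage_Ioi_neg_add_mul hσ]
    _ = gaussQ (b * σ / Real.sqrt (σ ^ 2 + τ)) := by
        rw [← map_measureReal_apply (by fun_prop) measurableSet_Ioi,
          gaussianReal_prod_gaussianReal_map_linear, measureReal_gaussianReal_Ioi]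
        · simp [hvτ, add_comm]
        · rw [← NNReal.coe_ne_zero]
          push_cast
          positivity
end

section
/- Let p(x) = (λ/2) exp(λ²N_T/2)·[e^{λx} Q((x + λN_T)/√N_T) + e^{−λx} Q((−x + λN_T)/√N_T)] be the Laplace–Gaussian convolution density with λ, N_T > 0. Then d/dx [log p(x)] = λ·(erfcx(α) − erfcx(β))/(erfcx(α) + erfcx(β)), where α = (x + λN_T)/√(2N_T), β = (−x + λN_T)/√(2N_T), erfcx(t) = e^{t²} erfc(t), and erfc(t) = 2Q(√2·t). -/
/-!
Write `p(x) = C (T(x) + T(-x))` with `T(x) = e^{λx} Q((x + λN)/√N)`. Since `Q' = -φ`,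
differentiating `T` produces the term `e^{λx} φ((x + λN)/√N)`, which by completing the square
equals `e^{-λ²N/2} φ(x/√N)` and is therefore even in `x`: the two such terms cancel and
`p' = λ C (T(x) - T(-x))`. The same square gives `T(x) = ½ e^{-x²/(2N) - λ²N/2} erfcx(α)`, whose
prefactor is again even in `x` and so cancels from `p'/p`.
-/

open MeasureTheory Real

/-- Complementary error function `erfc(t) = 2 Q(√2 t)`. -/
noncomputable def erfc (t : ℝ) : ℝ := 2 * gaussQ (Real.sqrt 2 * t)

/-- Scaled complementary error function `erfcx(t) = e^{t²} erfc(t)`. -/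
noncomputable def erfcx (t : ℝ) : ℝ := Real.exp (t ^ 2) * erfc t

/-- The Laplace–Gaussian convolution density (closed form). -/
noncomputable def laplaceGaussDensity (lam NT x : ℝ) : ℝ :=
  lam / 2 * Real.exp (lam ^ 2 * NT / 2) *
    (Real.exp (lam * x) * gaussQ ((x + lam * NT) / Real.sqrt NT)
      + Real.exp (-lam * x) * gaussQ ((-x + lam * NT) / Real.sqrt NT))

open ProbabilityTheory

theorem hasDerivAt_setIntegral_Ioi {E : Type*} [NormedAddCommGroup E] [NormedSpace ℝ E]
    [CompleteSpace E] {f : ℝ → E} {x : ℝ} (hf : Integrable f) (hfx : ContinuousAt f x) :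
    HasDerivAt (fun y => ∫ t in Set.Ioi y, f t) (-f x) x := by
  have hsplit : (fun y => ∫ t in Set.Ioi y, f t) =
      fun y => (∫ t in Set.Ioi x, f t) - ∫ t in x..y, f t := by
    funext y
    rw [← intervalIntegral.integral_Ioi_sub_Ioi' hf.integrableOn hf.integrableOn, sub_sub_cancel]
  rw [hsplit, ← zero_sub]
  exact (hasDerivAt_const x _).sub <| intervalIntegral.integral_hasDerivAt_right
    hf.intervalIntegrable hf.aestronglyMeasurable.stronglyMeasurableAtFilter hfx

theorem continuous_gaussianPDFReal (μ : ℝ) (v : NNReal) : Continuous (gaussianPDFReal μ v) := by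
  unfold gaussianPDFReal; fun_prop

theorem gaussQ_eq_setIntegral_gaussianPDFReal :
    gaussQ = fun x => ∫ t in Set.Ioi x, gaussianPDFReal 0 1 t := by
  funext x; simp [gaussQ, gaussianPDFReal]

theorem gaussQ_pos (x : ℝ) : 0 < gaussQ x := by
  rw [gaussQ_eq_setIntegral_gaussianPDFReal, setIntegral_pos_iff_support_of_nonneg_ae
    (.of_forall (gaussianPDFReal_nonneg 0 1)) (integrable_gaussianPDFReal 0 1).integrableOn,
    Function.support_eq_univ fun t => (gaussianPDFReal_pos 0 1 t one_ne_zero).ne', Set.univ_inter]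
  exact Measure.measure_Ioi_pos _ x

theorem hasDerivAt_gaussQ (x : ℝ) : HasDerivAt gaussQ (-gaussianPDFReal 0 1 x) x := by
  rw [gaussQ_eq_setIntegral_gaussianPDFReal]
  exact hasDerivAt_setIntegral_Ioi (integrable_gaussianPDFReal 0 1)
    (continuous_gaussianPDFReal 0 1).continuousAt

theorem erfcx_pos (t : ℝ) : 0 < erfcx t := by
  unfold erfcx erfc
  have hQ := gaussQ_pos (√2 * t)
  positivity

noncomputable def laplaceGaussTerm (lam NT x : ℝ) : ℝ :=
  exp (lam * x) * gaussQ ((x + lam * NT) / √NT)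

theorem laplaceGaussDensity_eq (lam NT x : ℝ) :
    laplaceGaussDensity lam NT x = lam / 2 * exp (lam ^ 2 * NT / 2) *
      (laplaceGaussTerm lam NT x + laplaceGaussTerm lam NT (-x)) := by
  simp only [laplaceGaussDensity, laplaceGaussTerm, neg_mul, mul_neg]

theorem laplaceGaussTerm_pos (lam NT x : ℝ) : 0 < laplaceGaussTerm lam NT x :=
  mul_pos (exp_pos _) (gaussQ_pos _)

theorem laplaceGaussDensity_pos {lam : ℝ} (hlam : 0 < lam) (NT x : ℝ) :
    0 < laplaceGaussDensity lam NT x := by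
  rw [laplaceGaussDensity_eq]
  have hT := laplaceGaussTerm_pos lam NT x
  have hTneg := laplaceGaussTerm_pos lam NT (-x)
  positivity

theorem exp_mul_gaussianPDFReal_shift (lam : ℝ) {NT : ℝ} (hNT : 0 < NT) (x : ℝ) :
    exp (lam * x) * gaussianPDFReal 0 1 ((x + lam * NT) / √NT) =
      exp (-(lam ^ 2 * NT / 2)) * gaussianPDFReal 0 1 (x / √NT) := by
  simp only [gaussianPDFReal, NNReal.coe_one, mul_one, sub_zero, div_pow, sq_sqrt hNT.le]
  rw [mul_left_comm, ← exp_add, mul_left_comm (exp _), ← exp_add]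
  congr 2
  field_simp
  ring

theorem hasDerivAt_laplaceGaussTerm (lam : ℝ) {NT : ℝ} (hNT : 0 < NT) (x : ℝ) :
    HasDerivAt (laplaceGaussTerm lam NT)
      (lam * laplaceGaussTerm lam NT x
        - exp (-(lam ^ 2 * NT / 2)) * gaussianPDFReal 0 1 (x / √NT) / √NT) x := by
  have hexp : HasDerivAt (fun y => exp (lam * y)) (exp (lam * x) * lam) x :=
    ((hasDerivAt_id x).const_mul lam).exp.congr_deriv (by simp)
  have harg : HasDerivAt (fun y => (y + lam * NT) / √NT) (1 / √NT) x :=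
    ((hasDerivAt_id x).add_const _).div_const _
  refine (hexp.mul ((hasDerivAt_gaussQ _).comp x harg)).congr_deriv ?_
  rw [← exp_mul_gaussianPDFReal_shift lam hNT, laplaceGaussTerm, Function.comp_apply]
  ring

theorem hasDerivAt_laplaceGaussDensity (lam : ℝ) {NT : ℝ} (hNT : 0 < NT) (x : ℝ) :
    HasDerivAt (laplaceGaussDensity lam NT) (lam / 2 * exp (lam ^ 2 * NT / 2) *
      (lam * (laplaceGaussTerm lam NT x - laplaceGaussTerm lam NT (-x)))) x := by
  have hrefl := (hasDerivAt_laplaceGaussTerm lam hNT (-x)).comp x (hasDerivAt_neg x)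
  rw [funext (laplaceGaussDensity_eq lam NT)]
  refine (((hasDerivAt_laplaceGaussTerm lam hNT x).add hrefl).const_mul _).congr_deriv ?_
  simp only [gaussianPDFReal, neg_div, sub_zero, neg_sq]
  ring

theorem laplaceGaussTerm_eq_erfcx (lam : ℝ) {NT : ℝ} (hNT : 0 < NT) (x : ℝ) :
    laplaceGaussTerm lam NT x =
      exp (-(x ^ 2 / (2 * NT)) - lam ^ 2 * NT / 2) / 2 * erfcx ((x + lam * NT) / √(2 * NT)) := by
  have hscale : √2 * ((x + lam * NT) / √(2 * NT)) = (x + lam * NT) / √NT := by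
    rw [sqrt_mul zero_le_two]
    field_simp
  rw [laplaceGaussTerm, erfcx, erfc, hscale, div_pow, sq_sqrt (by positivity)]
  have hexp : exp (lam * x) = exp (-(x ^ 2 / (2 * NT)) - lam ^ 2 * NT / 2) *
      exp ((x + lam * NT) ^ 2 / (2 * NT)) := by
    rw [← exp_add]; congr 1; field_simp; ring
  rw [hexp]
  ring

/-- Score function of the Laplace–Gaussian convolution density in numerically stable form:
`d/dx log p(x) = λ (erfcx α − erfcx β)/(erfcx α + erfcx β)`. -/
theorem deriv_log_laplaceGaussDensity (lam NT : ℝ) (hlam : 0 < lam) (hNT : 0 < NT) (x : ℝ) :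
    HasDerivAt (fun x => Real.log (laplaceGaussDensity lam NT x))
      (lam * (erfcx ((x + lam * NT) / Real.sqrt (2 * NT))
              - erfcx ((-x + lam * NT) / Real.sqrt (2 * NT)))
        / (erfcx ((x + lam * NT) / Real.sqrt (2 * NT))
            + erfcx ((-x + lam * NT) / Real.sqrt (2 * NT)))) x := by
  have hscore := (hasDerivAt_laplaceGaussDensity lam hNT x).log
    (laplaceGaussDensity_pos hlam NT x).ne'
  refine hscore.congr_deriv ?_
  have hα := erfcx_pos ((x + lam * NT) / √(2 * NT))
  have hβ := erfcx_pos ((-x + lam * NT) / √(2 * NT))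
  rw [laplaceGaussDensity_eq, laplaceGaussTerm_eq_erfcx lam hNT,
    laplaceGaussTerm_eq_erfcx lam hNT (-x), neg_sq]
  field_simp
end

section
/- Let X, Z be independent with Z ∼ N(0,1), and for σ₁ < σ₂ let F₂ be any measurable estimator. Define the Rao–Blackwellized estimator F̃₁(y) = E_{Z̃}[F₂(y + √(σ₂² − σ₁²)·Z̃)] where Z̃ ∼ N(0,1) is independent of everything else. Then E[|F̃₁(X + σ₁Z) − X|²] ≤ E[|F₂(X + σ₂Z') − X|²], where Z' ∼ N(0,1) is independent of X. -/
/-! Since `σ₁² + (σ₂² − σ₁²) = σ₂²`, the noise `σ₁ Z + √(σ₂² − σ₁²) Z̃` has the law of `σ₂ Z'`, so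
the risk of `F₂` at level `σ₂` is the risk of the randomized estimator `F₂ (y + √(σ₂² − σ₁²) Z̃)`
at level `σ₁`. Averaging over `Z̃` can only lower it: for each fixed `(X, Z)`,
`(E g − x)² ≤ E (g − x)²` because the variance of `g − x` is nonnegative. -/

open MeasureTheory ProbabilityTheory

section Jensen

variable {β : Type*} [MeasurableSpace β] {γ : Measure β} [IsProbabilityMeasure γ]

lemma sq_integral_sub_le_integral_sq_sub {g : β → ℝ} {c : ℝ} (hg : AEStronglyMeasurable g γ)
    (hg2 : Integrable (fun b => (g b - c) ^ 2) γ) :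
    (∫ b, g b ∂γ - c) ^ 2 ≤ ∫ b, (g b - c) ^ 2 ∂γ := by
  have hL2 : MemLp (fun b => g b - c) 2 γ :=
    (memLp_two_iff_integrable_sq (hg.sub aestronglyMeasurable_const)).2 hg2
  have hgi : Integrable g γ :=
    ((hL2.integrable one_le_two).add (integrable_const c)).congr (ae_of_all _ fun b => by simp)
  have hvar := variance_nonneg (fun b => g b - c) γ
  rw [variance_eq_sub hL2, integral_sub hgi (integrable_const c)] at hvar
  simpa [Pi.pow_apply] using hvar

lemma integral_sq_integral_sub_le_integral_prod {α : Type*} [MeasurableSpace α]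
    {ρ : Measure α} [SFinite ρ] {f : α × β → ℝ} {c : α → ℝ}
    (hf : AEStronglyMeasurable f (ρ.prod γ))
    (hint : Integrable (fun p => (f p - c p.1) ^ 2) (ρ.prod γ)) :
    ∫ a, (∫ b, f (a, b) ∂γ - c a) ^ 2 ∂ρ ≤ ∫ p, (f p - c p.1) ^ 2 ∂(ρ.prod γ) := by
  rw [integral_prod _ hint]
  refine integral_mono_of_nonneg (.of_forall fun a => sq_nonneg _) hint.integral_prod_left ?_
  filter_upwards [hf.prodMk_left, hint.prod_right_ae] with a hfa hinta
  exact sq_integral_sub_le_integral_sq_sub hfa hinta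

end Jensen

lemma gaussianReal_prod_map_mul_add_mul {a b c : ℝ} (h : a ^ 2 + b ^ 2 = c ^ 2) :
    ((gaussianReal 0 1).prod (gaussianReal 0 1)).map (fun p : ℝ × ℝ => a * p.1 + b * p.2)
      = (gaussianReal 0 1).map (c * ·) := by
  have hsplit : (fun p : ℝ × ℝ => a * p.1 + b * p.2)
      = (fun p : ℝ × ℝ => p.1 + p.2) ∘ Prod.map (a * ·) (b * ·) := rfl
  rw [hsplit, ← Measure.map_map (by fun_prop) (by fun_prop),
    ← Measure.map_prod_map _ _ (by fun_prop) (by fun_prop), gaussianReal_map_const_mul,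
    gaussianReal_map_const_mul, gaussianReal_map_const_mul, ← Measure.conv,
    gaussianReal_conv_gaussianReal]
  congr 1
  · simp
  · ext; simp [h]

lemma prod_prod_gaussianReal_map_mul_add_mul {α : Type*} [MeasurableSpace α] (ν : Measure α)
    [SFinite ν] {a b c : ℝ} (h : a ^ 2 + b ^ 2 = c ^ 2) :
    ((ν.prod (gaussianReal 0 1)).prod (gaussianReal 0 1)).map
        (fun q : (α × ℝ) × ℝ => (q.1.1, a * q.1.2 + b * q.2))
      = (ν.prod (gaussianReal 0 1)).map (fun p : α × ℝ => (p.1, c * p.2)) := by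
  have hassoc : (fun q : (α × ℝ) × ℝ => (q.1.1, a * q.1.2 + b * q.2))
      = Prod.map id (fun v : ℝ × ℝ => a * v.1 + b * v.2) ∘ MeasurableEquiv.prodAssoc := rfl
  rw [hassoc, ← Measure.map_map (by fun_prop) MeasurableEquiv.prodAssoc.measurable,
    Measure.prodAssoc_prod, ← Measure.map_prod_map _ _ measurable_id (by fun_prop),
    gaussianReal_prod_map_mul_add_mul h, Measure.map_prod_map _ _ measurable_id (by fun_prop)]
  rfl

lemma integrable_sq_sub {α : Type*} [MeasurableSpace α] {μ : Measure α} {f g : α → ℝ}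
    (hf : AEStronglyMeasurable f μ) (hg : AEStronglyMeasurable g μ)
    (hf2 : Integrable (fun x => f x ^ 2) μ) (hg2 : Integrable (fun x => g x ^ 2) μ) :
    Integrable (fun x => (f x - g x) ^ 2) μ :=
  (memLp_two_iff_integrable_sq (hf.sub hg)).1
    (((memLp_two_iff_integrable_sq hf).2 hf2).sub ((memLp_two_iff_integrable_sq hg).2 hg2))

section Independence

variable {Ω : Type*} [MeasurableSpace Ω] {μ : Measure Ω} [IsFiniteMeasure μ] {X Z : Ω → ℝ}

lemma ProbabilityTheory.IndepFun.map_prodMk_eq_map_prod_gaussianReal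
    (hX : Measurable X) (hZ : Measurable Z)
    (hZdist : μ.map Z = gaussianReal 0 1) (hXZ : IndepFun X Z μ) :
    μ.map (fun ω => (X ω, Z ω)) = (μ.map X).prod (gaussianReal 0 1) := by
  rw [← hZdist]
  exact (indepFun_iff_map_prod_eq_prod_map_map hX.aemeasurable hZ.aemeasurable).1 hXZ

lemma ProbabilityTheory.IndepFun.map_prodMk_mul_eq_map_mul_add_mul
    (hX : Measurable X) (hZ : Measurable Z)
    (hZdist : μ.map Z = gaussianReal 0 1) (hXZ : IndepFun X Z μ) {a b c : ℝ}
    (h : a ^ 2 + b ^ 2 = c ^ 2) :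
    μ.map (fun ω => (X ω, c * Z ω))
      = (((μ.map X).prod (gaussianReal 0 1)).prod (gaussianReal 0 1)).map
          (fun q => (q.1.1, a * q.1.2 + b * q.2)) := by
  rw [prod_prod_gaussianReal_map_mul_add_mul _ h,
    ← hXZ.map_prodMk_eq_map_prod_gaussianReal hX hZ hZdist,
    Measure.map_map (by fun_prop) (by fun_prop)]
  rfl

end Independence

/-- Rao–Blackwellization across noise levels: for `σ₁ < σ₂` and any measurable estimator
`F₂`, the estimator `F̃₁(y) = E_{Z̃}[F₂(y + √(σ₂² − σ₁²) Z̃)]` applied at noise level `σ₁`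
has mean-squared error at most that of `F₂` at noise level `σ₂`. -/
theorem rao_blackwell_noise_levels {Ω : Type*} [MeasurableSpace Ω] (μ : Measure Ω)
    [IsProbabilityMeasure μ] (X Z Z' : Ω → ℝ)
    (hX : Measurable X) (hZ : Measurable Z) (hZ' : Measurable Z')
    (hZdist : μ.map Z = gaussianReal 0 1) (hZ'dist : μ.map Z' = gaussianReal 0 1)
    (hindepZ : IndepFun X Z μ) (hindepZ' : IndepFun X Z' μ)
    (σ₁ σ₂ : ℝ) (hσ₁ : 0 < σ₁) (hσ₁₂ : σ₁ < σ₂)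
    (F₂ : ℝ → ℝ) (hF₂ : Measurable F₂)
    (hF₂int : Integrable (fun ω => (F₂ (X ω + σ₂ * Z' ω)) ^ 2) μ)
    (hX2 : Integrable (fun ω => (X ω) ^ 2) μ) :
    ∫ ω, ((∫ z, F₂ (X ω + σ₁ * Z ω + Real.sqrt (σ₂ ^ 2 - σ₁ ^ 2) * z)
          ∂(gaussianReal 0 1)) - X ω) ^ 2 ∂μ
      ≤ ∫ ω, (F₂ (X ω + σ₂ * Z' ω) - X ω) ^ 2 ∂μ := by
  set s := Real.sqrt (σ₂ ^ 2 - σ₁ ^ 2)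
  have hs : σ₁ ^ 2 + s ^ 2 = σ₂ ^ 2 := by
    rw [Real.sq_sqrt (by nlinarith)]; ring
  have hlaw := hindepZ'.map_prodMk_mul_eq_map_mul_add_mul hX hZ' hZ'dist hs
  set γ := gaussianReal 0 1
  set ν := μ.map X
  set err : ℝ × ℝ → ℝ := fun p => (F₂ (p.1 + p.2) - p.1) ^ 2
  have hint : Integrable err (μ.map (fun ω => (X ω, σ₂ * Z' ω))) := by
    rw [integrable_map_measure (by fun_prop) (by fun_prop)]
    exact integrable_sq_sub (by fun_prop : Measurable _).aestronglyMeasurable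
      hX.aestronglyMeasurable hF₂int hX2
  rw [hlaw, integrable_map_measure (by fun_prop) (by fun_prop)] at hint
  have hF₁ : Measurable fun p : ℝ × ℝ => ∫ w, F₂ (p.1 + σ₁ * p.2 + s * w) ∂γ :=
    (StronglyMeasurable.integral_prod_right'
      (f := fun q : (ℝ × ℝ) × ℝ => F₂ (q.1.1 + σ₁ * q.1.2 + s * q.2)) (by fun_prop)).measurable
  calc _ = ∫ p, (∫ w, F₂ (p.1 + σ₁ * p.2 + s * w) ∂γ - p.1) ^ 2 ∂(ν.prod γ) := by
        rw [← hindepZ.map_prodMk_eq_map_prod_gaussianReal hX hZ hZdist,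
          integral_map (by fun_prop) (by fun_prop)]
    _ ≤ ∫ q, (F₂ (q.1.1 + σ₁ * q.1.2 + s * q.2) - q.1.1) ^ 2 ∂((ν.prod γ).prod γ) :=
        integral_sq_integral_sub_le_integral_prod
          (f := fun q : (ℝ × ℝ) × ℝ => F₂ (q.1.1 + σ₁ * q.1.2 + s * q.2))
          (c := fun p : ℝ × ℝ => p.1) (by fun_prop : Measurable _).aestronglyMeasurable
          (by simpa [err, Function.comp_def, add_assoc] using hint)
    _ = ∫ p, err p ∂(μ.map (fun ω => (X ω, σ₂ * Z' ω))) := by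
        rw [hlaw, integral_map (by fun_prop) (by fun_prop)]
        simp [err, add_assoc]
    _ = _ := integral_map (by fun_prop) (by fun_prop)
end
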